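/- arXiv:2506.09133 — 5 statements merged into one kernel-verified Lean document; each statement's English description precedes it below -/
import Mathlib

section
/- A line can intersect the interiors of at most two of the five 'corner triangles' of a convex pentagon, where the corner triangle at vertex v_i is the convex hull of v_i and the midpoints of its two adjacent edges. -/
/-! The diagonal `v (b - 1) v (b + 1)` of a convex pentagon cuts off the vertex `v b` from the other
two vertices, so the parallel line halfway between the diagonal and `v b` separates the corner
triangle at `v b` (its interior strictly) from the other four corner triangles. If a line met
three interiors, the middle one of the three points would lie in a convex half-plane containing
the other two corner triangles but disjoint from its own interior. -/

open Set Module Submodule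

section LinearAlgebra

variable {V : Type*} [AddCommGroup V] [Module ℝ V]

theorem span_sub_eq_top_of_not_collinear [FiniteDimensional ℝ V] (hV : finrank ℝ V = 2)
    {o p r : V} (h : ¬Collinear ℝ {o, p, r}) : span ℝ {p - o, r - o} = ⊤ := by
  have htop : vectorSpan ℝ {o, p, r} = ⊤ := by
    apply Submodule.eq_top_of_finrank_eq
    have := (collinear_iff_finrank_le_one (k := ℝ)).not.mp h
    have := Submodule.finrank_le (vectorSpan ℝ ({o, p, r} : Set V))
    omega
  rw [vectorSpan_eq_span_vsub_set_right ℝ (mem_insert o _)] at htop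
  simpa [image_insert_eq] using htop

theorem collinear_of_apply_eq [FiniteDimensional ℝ V] (hV : finrank ℝ V = 2)
    {f : V →ₗ[ℝ] ℝ} (hf : f ≠ 0) {a b c : V} (hb : f b = f a) (hc : f c = f a) :
    Collinear ℝ {a, b, c} := by
  by_contra h
  have hker : span ℝ {b - a, c - a} ≤ LinearMap.ker f := by
    rw [span_le, insert_subset_iff, singleton_subset_iff]
    simp [hb, hc]
  rw [span_sub_eq_top_of_not_collinear hV h, top_le_iff, LinearMap.ker_eq_top] at hker
  exact hf hker

theorem exists_linearMap_apply_eq_apply_lt {o p r : V} (h : ¬Collinear ℝ {p, o, r}) :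
    ∃ g : V →ₗ[ℝ] ℝ, g r = g o ∧ g o < g p := by
  have hp : p - o ∉ ℝ ∙ (r - o) := fun hmem => h <| collinear_insert_of_mem_affineSpan_pair <| by
    rw [← AffineSubspace.vsub_right_mem_direction_iff_mem (left_mem_affineSpan_pair ℝ o r),
      direction_affineSpan, vectorSpan_pair_rev]
    exact hmem
  obtain ⟨g, hgp, hker⟩ := Submodule.exists_le_ker_of_notMem hp
  have hgr : g (r - o) = 0 := hker (mem_span_singleton_self _)
  rw [map_sub, sub_eq_zero] at hgr
  rw [map_sub, sub_ne_zero] at hgp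
  rcases hgp.lt_or_gt with hlt | hlt
  · exact ⟨-g, by simp [hgr], by simpa using hlt⟩
  · exact ⟨g, hgr, hlt⟩

/-- At a vertex `o` with neighbours `p`, `q` and a further vertex `r`, where `f`, `f'` support
the edges `o p`, `o q` strictly, the diagonal `o r` separates `p` from `q`: writing
`q - o = α (p - o) + β (r - o)`, `f` forces `β > 0` and then `f'` forces `α < 0`. -/
theorem apply_lt_of_adjacent_edges {o p q r : V} (hspan : span ℝ {p - o, r - o} = ⊤)
    {f f' g : V →ₗ[ℝ] ℝ} (hfp : f p = f o) (hfq : f q < f o) (hfr : f r < f o)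
    (hf'q : f' q = f' o) (hf'p : f' p < f' o) (hf'r : f' r < f' o)
    (hgr : g r = g o) (hgp : g o < g p) : g q < g o := by
  obtain ⟨α, β, hq⟩ := mem_span_pair.mp (hspan ▸ mem_top : q - o ∈ span ℝ {p - o, r - o})
  have hf := congr(f $hq)
  have hf' := congr(f' $hq)
  have hg := congr(g $hq)
  simp only [map_add, map_smul, map_sub, smul_eq_mul, hfp, hf'q, hgr, sub_self, mul_zero,
    zero_add, add_zero] at hf hf' hg
  have hβ : 0 < β := pos_of_mul_neg_right (by linarith) (sub_neg.mpr hfr).le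
  have hα : α < 0 := by nlinarith
  nlinarith

theorem convexIndependent_of_forall_notMem_convexHull {ι : Type*} {v : ι → V}
    (h : ∀ i, v i ∉ convexHull ℝ (v '' {j | j ≠ i})) : ConvexIndependent ℝ v :=
  convexIndependent_iff_notMem_convexHull_sdiff.mpr fun i _ hi =>
    h i <| convexHull_mono (image_mono fun _ hj => hj.2) hi

theorem ConvexIndependent.not_collinear {ι : Type*} {v : ι → V} (hv : ConvexIndependent ℝ v)
    {i j k : ι} (hij : i ≠ j) (hjk : j ≠ k) (hik : i ≠ k) :
    ¬Collinear ℝ {v i, v j, v k} := by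
  have between : ∀ {a b c : ι}, b ≠ a → b ≠ c → ¬Wbtw ℝ (v a) (v b) (v c) := by
    intro a b c hba hbc hw
    have hmem : v b ∈ convexHull ℝ (v '' {a, c}) := by
      rw [image_pair, convexHull_pair]
      exact mem_segment_iff_wbtw.mpr hw
    rcases (hv.mem_convexHull_iff _ _).mp hmem with h | h
    exacts [hba h, hbc h]
  intro hcol
  rcases hcol.wbtw_or_wbtw_or_wbtw with hw | hw | hw
  exacts [between hij.symm hjk hw, between hjk.symm hik.symm hw, between hik hij hw]

theorem ncard_setOf_inter_nonempty_le_two {ι : Type*} [Finite ι] (A : ι → Set V)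
    (hA : ∀ b, ∃ C : Set V, Convex ℝ C ∧ (∀ j ≠ b, A j ⊆ C) ∧ Disjoint (A b) C)
    {L : Set V} (hL : Collinear ℝ L) : {i | (L ∩ A i).Nonempty}.ncard ≤ 2 := by
  by_contra! h3
  obtain ⟨a, b, c, ⟨xa, hxaL, hxa⟩, ⟨xb, hxbL, hxb⟩, ⟨xc, hxcL, hxc⟩, hab, hac, hbc⟩ :=
    (two_lt_ncard_iff).mp h3
  have between : ∀ {i j k : ι} {xi xj xk : V}, j ≠ i → j ≠ k → xi ∈ A i → xj ∈ A j →
      xk ∈ A k → ¬Wbtw ℝ xi xj xk := by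
    intro i j k xi xj xk hji hjk hxi hxj hxk hw
    obtain ⟨C, hC, hsub, hdisj⟩ := hA j
    exact hdisj.notMem_of_mem_left hxj <|
      hC.segment_subset (hsub i hji.symm hxi) (hsub k hjk.symm hxk) (mem_segment_iff_wbtw.mpr hw)
  have hcol : Collinear ℝ {xa, xb, xc} := hL.subset (by simp [insert_subset_iff, *])
  rcases hcol.wbtw_or_wbtw_or_wbtw with hw | hw | hw
  exacts [between hab.symm hbc hxa hxb hxc hw, between hbc.symm hac.symm hxb hxc hxa hw,
    between hac hab hxc hxa hxb hw]

def cornerTriangle (v : Fin 5 → V) (i : Fin 5) : Set V :=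
  convexHull ℝ {midpoint ℝ (v (i - 1)) (v i), v i, midpoint ℝ (v (i + 1)) (v i)}

end LinearAlgebra

section Normed

variable {E : Type*} [NormedAddCommGroup E] [NormedSpace ℝ E]

theorem exists_support_of_midpoint_mem_frontier {P : Set E} (hP : Convex ℝ P)
    (hPint : (interior P).Nonempty) {x y : E} (hx : x ∈ P) (hy : y ∈ P)
    (hm : midpoint ℝ x y ∈ frontier P) :
    ∃ f : StrongDual ℝ E, f ≠ 0 ∧ f y = f x ∧ ∀ z ∈ P, f z ≤ f x := by
  obtain ⟨f, hf0, hf⟩ := geometric_hahn_banach_of_nonempty_interior_point hP hm.2 hPint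
  have hmid : f x + f y = f (midpoint ℝ x y) + f (midpoint ℝ x y) := by
    rw [← map_add, ← map_add, midpoint_add_self]
  have hfx := hf x hx
  have hfy := hf y hy
  refine ⟨f, hf0, by linarith, fun z hz => ?_⟩
  linarith [hf z hz]

theorem interior_convexHull_nonempty_of_not_collinear [FiniteDimensional ℝ E]
    (hE : finrank ℝ E = 2) {s : Set E} {a b c : E} (hs : {a, b, c} ⊆ s)
    (h : ¬Collinear ℝ {a, b, c}) : (interior (convexHull ℝ s)).Nonempty := by
  rw [(convex_convexHull ℝ s).interior_nonempty_iff_affineSpan_eq_top, affineSpan_convexHull,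
    eq_top_iff]
  have hind := affineIndependent_iff_not_collinear_set.mpr h
  have htop := hind.affineSpan_eq_top_iff_card_eq_finrank_add_one.mpr (by simp [hE])
  rw [← htop]
  refine affineSpan_mono ℝ (range_subset_iff.mpr fun i => hs ?_)
  fin_cases i <;> simp

theorem disjoint_interior_setOf_le {s : Set E} {g : StrongDual ℝ E} (hg : g ≠ 0) {γ : ℝ}
    (hs : s ⊆ {x | γ ≤ g x}) : Disjoint (interior s) {x | g x ≤ γ} := by
  refine disjoint_left.mpr fun x hx hle => ?_
  have hx' : x ∈ g ⁻¹' interior (Ici γ) := by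
    rw [(g.isOpenMap_of_ne_zero hg).preimage_interior_eq_interior_preimage g.continuous]
    exact interior_mono hs hx
  rw [interior_Ici, mem_preimage, mem_Ioi] at hx'
  exact hx'.not_ge hle

theorem exists_functional_supporting_edge [FiniteDimensional ℝ E] (hE : finrank ℝ E = 2)
    {v : Fin 5 → E} (hv : ConvexIndependent ℝ v)
    (hcyc : ∀ i, segment ℝ (v i) (v (i + 1)) ⊆ frontier (convexHull ℝ (range v))) (i : Fin 5) :
    ∃ f : StrongDual ℝ E,
      f (v (i + 1)) = f (v i) ∧ ∀ j, j ≠ i → j ≠ i + 1 → f (v j) < f (v i) := by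
  have hmem : ∀ j, v j ∈ convexHull ℝ (range v) :=
    fun j => subset_convexHull ℝ _ (mem_range_self j)
  have hint := interior_convexHull_nonempty_of_not_collinear hE (s := range v)
    (by simp [insert_subset_iff]) (hv.not_collinear (i := 0) (j := 1) (k := 2)
      (by decide) (by decide) (by decide))
  obtain ⟨f, hf0, hfi, hfle⟩ := exists_support_of_midpoint_mem_frontier
    (convex_convexHull ℝ _) hint (hmem i) (hmem (i + 1)) (hcyc i (midpoint_mem_segment _ _))
  refine ⟨f, hfi, fun j hji hji' => (hfle _ (hmem j)).lt_of_ne fun heq => ?_⟩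
  have hf0' : (f : E →ₗ[ℝ] ℝ) ≠ 0 := fun h => hf0 (ContinuousLinearMap.coe_injective h)
  exact hv.not_collinear (i := i) (j := i + 1) (k := j) (by omega) (by omega) (by omega)
    (collinear_of_apply_eq hE hf0' hfi heq)

theorem exists_functional_separating_vertex [FiniteDimensional ℝ E] (hE : finrank ℝ E = 2)
    {v : Fin 5 → E} (hv : ConvexIndependent ℝ v)
    (hcyc : ∀ i, segment ℝ (v i) (v (i + 1)) ⊆ frontier (convexHull ℝ (range v))) (b : Fin 5) :
    ∃ g : StrongDual ℝ E, g (v (b - 1)) = g (v (b + 1)) ∧ g (v (b + 1)) < g (v b) ∧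
      ∀ j ≠ b, g (v j) ≤ g (v (b + 1)) := by
  obtain ⟨g, hgr, hgp⟩ := exists_linearMap_apply_eq_apply_lt (o := v (b + 1)) (p := v b)
    (r := v (b - 1)) (hv.not_collinear (by omega) (by omega) (by omega))
  have hnext : g (v (b + 2)) < g (v (b + 1)) := by
    obtain ⟨f, hf, hflt⟩ := exists_functional_supporting_edge hE hv hcyc b
    obtain ⟨f', hf', hf'lt⟩ := exists_functional_supporting_edge hE hv hcyc (b + 1)
    rw [show b + 1 + 1 = b + 2 by omega] at hf' hf'lt
    exact apply_lt_of_adjacent_edges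
      (span_sub_eq_top_of_not_collinear hE (hv.not_collinear (by omega) (by omega) (by omega)))
      (f := f) (f' := f') hf.symm ((hflt _ (by omega) (by omega)).trans_eq hf.symm)
      ((hflt _ (by omega) (by omega)).trans_eq hf.symm) hf' (hf'lt _ (by omega) (by omega))
      (hf'lt _ (by omega) (by omega)) hgr hgp
  have hprev : g (v (b - 2)) < g (v (b - 1)) := by
    obtain ⟨f, hf, hflt⟩ := exists_functional_supporting_edge hE hv hcyc (b - 1)
    obtain ⟨f', hf', hf'lt⟩ := exists_functional_supporting_edge hE hv hcyc (b - 2)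
    rw [show b - 1 + 1 = b by omega] at hf hflt
    rw [show b - 2 + 1 = b - 1 by omega] at hf' hf'lt
    exact apply_lt_of_adjacent_edges
      (span_sub_eq_top_of_not_collinear hE (hv.not_collinear (by omega) (by omega) (by omega)))
      (f := f) (f' := f') hf (hflt _ (by omega) (by omega)) (hflt _ (by omega) (by omega))
      hf'.symm ((hf'lt _ (by omega) (by omega)).trans_eq hf'.symm)
      ((hf'lt _ (by omega) (by omega)).trans_eq hf'.symm) hgr.symm (hgr ▸ hgp)
  refine ⟨LinearMap.toContinuousLinearMap g, hgr, hgp, fun j hj => ?_⟩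
  rcases (by omega : j = b + 1 ∨ j = b + 2 ∨ j = b - 2 ∨ j = b - 1) with rfl | rfl | rfl | rfl
  exacts [le_rfl, hnext.le, (hprev.trans_eq hgr).le, hgr.le]

theorem exists_convex_separating_cornerTriangle [FiniteDimensional ℝ E] (hE : finrank ℝ E = 2)
    {v : Fin 5 → E} (hv : ConvexIndependent ℝ v)
    (hcyc : ∀ i, segment ℝ (v i) (v (i + 1)) ⊆ frontier (convexHull ℝ (range v))) (b : Fin 5) :
    ∃ C : Set E, Convex ℝ C ∧ (∀ j ≠ b, interior (cornerTriangle v j) ⊆ C) ∧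
      Disjoint (interior (cornerTriangle v b)) C := by
  obtain ⟨g, hprev, hlt, hle⟩ := exists_functional_separating_vertex hE hv hcyc b
  have hmid : ∀ x y, g (midpoint ℝ x y) = (g x + g y) / 2 := fun x y => by
    rw [midpoint_eq_smul_add, map_smul, map_add, smul_eq_mul, invOf_eq_inv]
    ring
  have hg0 : g ≠ 0 := by
    rintro rfl
    simp at hlt
  set γ := (g (v (b + 1)) + g (v b)) / 2 with hγ
  have hle_top : ∀ k, g (v k) ≤ g (v b) := fun k => by
    by_cases hk : k = b
    · rw [hk]
    · exact (hle k hk).trans hlt.le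
  refine ⟨{x | g x ≤ γ}, convex_halfSpace_le g.toLinearMap.isLinear γ, fun j hj => ?_,
    disjoint_interior_setOf_le hg0 ?_⟩
  · refine interior_subset.trans
      (convexHull_min ?_ (convex_halfSpace_le g.toLinearMap.isLinear γ))
    simp only [insert_subset_iff, singleton_subset_iff, mem_ofPred_eq, hmid]
    refine ⟨?_, ?_, ?_⟩ <;> linarith [hle j hj, hle_top (j - 1), hle_top (j + 1)]
  · refine convexHull_min ?_ (convex_halfSpace_ge g.toLinearMap.isLinear γ)
    simp only [insert_subset_iff, singleton_subset_iff, mem_ofPred_eq, hmid, hprev]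
    refine ⟨?_, ?_, ?_⟩ <;> linarith

end Normed

theorem stmt_10_general (v : Fin 5 → (Fin 2 → ℝ))
    (hconvpos : ∀ i : Fin 5, v i ∉ convexHull ℝ (v '' {j | j ≠ i}))
    (hcyc : ∀ i : Fin 5,
      segment ℝ (v i) (v (i + 1)) ⊆ frontier (convexHull ℝ (Set.range v)))
    (T : Fin 5 → Set (Fin 2 → ℝ))
    (hT : ∀ i, T i = convexHull ℝ
      {midpoint ℝ (v (i - 1)) (v i), v i, midpoint ℝ (v (i + 1)) (v i)})
    (p d : Fin 2 → ℝ)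
    (L : Set (Fin 2 → ℝ)) (hL : L = {x | ∃ t : ℝ, x = p + t • d}) :
    {i : Fin 5 | (L ∩ interior (T i)).Nonempty}.ncard ≤ 2 := by
  obtain rfl : T = cornerTriangle v := funext hT
  have hcol : Collinear ℝ L := (collinear_iff_exists_forall_eq_smul_vadd L).mpr
    ⟨p, d, fun x hx => by
      obtain ⟨t, rfl⟩ := hL ▸ hx
      exact ⟨t, add_comm _ _⟩⟩
  have hv := convexIndependent_of_forall_notMem_convexHull hconvpos
  exact ncard_setOf_inter_nonempty_le_two _
    (exists_convex_separating_cornerTriangle (by simp) hv hcyc) hcol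

/-- A line intersects the interiors of at most two of the five corner triangles
`T i = conv {(v (i−1) + v i)/2, v i, (v (i+1) + v i)/2}` of a convex pentagon
with vertices `v 0, …, v 4` (in cyclic order, indices mod 5). -/
theorem stmt_10 (v : Fin 5 → (Fin 2 → ℝ))
    (hconvpos : ∀ i : Fin 5, v i ∉ convexHull ℝ (v '' {j | j ≠ i}))
    (hcyc : ∀ i : Fin 5,
      segment ℝ (v i) (v (i + 1)) ⊆ frontier (convexHull ℝ (Set.range v)))
    (T : Fin 5 → Set (Fin 2 → ℝ))
    (hT : ∀ i, T i = convexHull ℝ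
      {midpoint ℝ (v (i - 1)) (v i), v i, midpoint ℝ (v (i + 1)) (v i)})
    (p d : Fin 2 → ℝ) (hd : d ≠ 0)
    (L : Set (Fin 2 → ℝ)) (hL : L = {x | ∃ t : ℝ, x = p + t • d}) :
    {i : Fin 5 | (L ∩ interior (T i)).Nonempty}.ncard ≤ 2 :=
  stmt_10_general v hconvpos hcyc T hT p d L hL
end

section
/- The 5×5 matrix C¹ (circulant with first column (1/10)(2(√5−1), 8−2√5, 2(√5−1), 3−√5, 3−√5)ᵀ) admits a nonnegative matrix factorization C¹ = A²B² of inner dimension 4, where A² and B² are the explicit 5×4 and 4×5 nonnegative matrices given in the paper; hence the nonnegative rank of C¹ is at most 4. -/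
set_option maxHeartbeats 4000000 in

/-- The circulant matrix `C¹` admits a nonnegative matrix factorization
`C¹ = A² * B²` of inner dimension 4, with the explicit nonnegative matrices `A²`
and `B²` from the paper; hence the nonnegative rank of `C¹` is at most 4. -/
theorem stmt_15
    (c : Fin 5 → ℝ)
    (hc : c = ![2 * (Real.sqrt 5 - 1) / 10, (8 - 2 * Real.sqrt 5) / 10,
      2 * (Real.sqrt 5 - 1) / 10, (3 - Real.sqrt 5) / 10, (3 - Real.sqrt 5) / 10])
    (C1 : Matrix (Fin 5) (Fin 5) ℝ)
    (hC1 : ∀ i j : Fin 5, C1 i j = c (i + j))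
    (A2 : Matrix (Fin 5) (Fin 4) ℝ)
    (hA2 : A2 = !![0, 1 - 1 / Real.sqrt 5, 0, (5 - Real.sqrt 5) / 10;
      1 / Real.sqrt 5, 1 / Real.sqrt 5, 0, 0;
      1 - 1 / Real.sqrt 5, 0, (5 - Real.sqrt 5) / 10, 0;
      0, 0, 1 - 1 / Real.sqrt 5, (3 * Real.sqrt 5 - 5) / 10;
      0, 0, (3 * Real.sqrt 5 - 5) / 10, 1 - 1 / Real.sqrt 5])
    (B2 : Matrix (Fin 4) (Fin 5) ℝ)
    (hB2 : B2 = (1 / 20 : ℝ) •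
      !![20 * (2 / Real.sqrt 5 - 1 / 2), 5 - Real.sqrt 5, 0,
           2 * (3 * Real.sqrt 5 - 5), 3 * (5 - Real.sqrt 5);
         20 * (2 / Real.sqrt 5 - 1 / 2), 3 * (5 - Real.sqrt 5),
           2 * (3 * Real.sqrt 5 - 5), 0, 5 - Real.sqrt 5;
         20 * (1 - 2 / Real.sqrt 5), 0, 2 * (5 - Real.sqrt 5),
           20 * (1 - 1 / Real.sqrt 5), 4 * Real.sqrt 5;
         20 * (1 - 2 / Real.sqrt 5), 4 * Real.sqrt 5,
           20 * (1 - 1 / Real.sqrt 5), 2 * (5 - Real.sqrt 5), 0]) :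
    (∀ i j, 0 ≤ A2 i j) ∧ (∀ i j, 0 ≤ B2 i j) ∧ A2 * B2 = C1 ∧
    ∃ (R : Matrix (Fin 5) (Fin 4) ℝ) (E : Matrix (Fin 4) (Fin 5) ℝ),
      (∀ i j, 0 ≤ R i j) ∧ (∀ i j, 0 ≤ E i j) ∧ C1 = R * E := by
  have h5 : Real.sqrt 5 * Real.sqrt 5 = 5 := Real.mul_self_sqrt (by norm_num)
  have h2 : (2:ℝ) < Real.sqrt 5 := by nlinarith [Real.sqrt_nonneg 5]
  have h3 : Real.sqrt 5 < 3 := by nlinarith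
  have hpos : (0:ℝ) < Real.sqrt 5 := by linarith
  have hne : Real.sqrt 5 ≠ 0 := ne_of_gt hpos
  have hipos : (0:ℝ) < (Real.sqrt 5)⁻¹ := by positivity
  have hi : (Real.sqrt 5)⁻¹ * Real.sqrt 5 = 1 := inv_mul_cancel₀ hne
  have hp2 : Real.sqrt 5 ^ 2 = 5 := by rw [pow_two, h5]
  have hp3 : Real.sqrt 5 ^ 3 = 5 * Real.sqrt 5 := by rw [pow_succ, hp2]
  have hp4 : Real.sqrt 5 ^ 4 = 25 := by rw [pow_succ, hp3]; nlinarith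
  have hb1 : 2 / Real.sqrt 5 ≤ 1 := by rw [div_le_one hpos]; linarith
  have hb2 : (2:ℝ)⁻¹ ≤ 2 / Real.sqrt 5 := by
    rw [le_div_iff₀ hpos]; linarith
  have hAn : ∀ i j, 0 ≤ A2 i j := by
    intro i j
    fin_cases i <;> fin_cases j <;>
        simp [hA2, Matrix.vecHead, Matrix.vecTail] <;>
      nlinarith [hi, hipos, h5, h2, h3]
  have hBn : ∀ i j, 0 ≤ B2 i j := by
    intro i j
    fin_cases i <;> fin_cases j <;>
        simp [hB2, Matrix.vecHead, Matrix.vecTail] <;>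
      nlinarith [hi, hipos, h5, h2, h3, hb1, hb2]
  have hprod : A2 * B2 = C1 := by
    ext i j
    fin_cases i <;> fin_cases j <;>
      (simp [hA2, hB2, hC1, hc, Matrix.mul_apply, Fin.sum_univ_four,
        Matrix.vecHead, Matrix.vecTail]
       try field_simp
       try ring_nf
       try simp only [hp2, hp3, hp4]
       try ring_nf
       try linarith)
  exact ⟨hAn, hBn, hprod, A2, B2, hAn, hBn, hprod.symm⟩
end

section
/- The 5×5 matrix C¹ admits a nonnegative factorization C¹ = A¹B¹ of inner dimension 5 in which rank(A¹) = rank(B¹) = rank(C¹) = 3, where A¹ and B¹ are the explicit circulant-like 5×5 nonnegative matrices with entries from {0, (5−√5)/10, 2√5/10}. -/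
set_option maxHeartbeats 1000000

private lemma rank3_aux (A : Matrix (Fin 5) (Fin 5) ℝ)
    (Y : Matrix (Fin 5) (Fin 3) ℝ) (Z : Matrix (Fin 3) (Fin 5) ℝ)
    (hfac : A = Y * Z)
    (L : Matrix (Fin 3) (Fin 5) ℝ) (R : Matrix (Fin 5) (Fin 3) ℝ)
    (M : Matrix (Fin 3) (Fin 3) ℝ) (hM : L * A * R = M) (hdet : M.det ≠ 0) :
    A.rank = 3 := by
  refine le_antisymm ?_ ?_
  · calc A.rank ≤ Y.rank := hfac ▸ Matrix.rank_mul_le_left Y Z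
      _ ≤ Fintype.card (Fin 3) := Matrix.rank_le_card_width Y
      _ = 3 := by simp
  · have h3 : M.rank = 3 := by
      rw [Matrix.rank_of_isUnit M ((Matrix.isUnit_iff_isUnit_det M).2 (isUnit_iff_ne_zero.2 hdet))]
      simp
    calc (3 : ℕ) = M.rank := h3.symm
      _ = (L * A * R).rank := by rw [hM]
      _ ≤ (L * A).rank := Matrix.rank_mul_le_left _ _
      _ ≤ A.rank := Matrix.rank_mul_le_right _ _

private lemma mulAB_aux (s : ℝ) (h5 : s * s = 5) :
    ((1 / 10 : ℝ) •
      !![5 - s, 2 * s, 5 - s, 0, 0; 0, 5 - s, 2 * s, 5 - s, 0; 0, 0, 5 - s, 2 * s, 5 - s;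
         5 - s, 0, 0, 5 - s, 2 * s; 2 * s, 5 - s, 0, 0, 5 - s]) *
    ((1 / 10 : ℝ) •
      !![0, 5 - s, 2 * s, 5 - s, 0; 5 - s, 2 * s, 5 - s, 0, 0; 2 * s, 5 - s, 0, 0, 5 - s;
         5 - s, 0, 0, 5 - s, 2 * s; 0, 0, 5 - s, 2 * s, 5 - s]) =
    (1/10 : ℝ) • !![2*(s-1), 8-2*s, 2*(s-1), 3-s, 3-s;
      8-2*s, 2*(s-1), 3-s, 3-s, 2*(s-1);
      2*(s-1), 3-s, 3-s, 2*(s-1), 8-2*s;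
      3-s, 3-s, 2*(s-1), 8-2*s, 2*(s-1);
      3-s, 2*(s-1), 8-2*s, 2*(s-1), 3-s] := by
  ext i j
  fin_cases i <;> fin_cases j <;>
    simp [Matrix.mul_apply, Fin.sum_univ_five, Matrix.smul_apply,
      Matrix.vecHead, Matrix.vecTail] <;>
    nlinarith [h5]

private lemma rankA_aux (s : ℝ) (hs0 : 0 ≤ s) (h5 : s * s = 5)
    (A : Matrix (Fin 5) (Fin 5) ℝ)
    (hA : A = (1 / 10 : ℝ) •
      !![5 - s, 2 * s, 5 - s, 0, 0; 0, 5 - s, 2 * s, 5 - s, 0; 0, 0, 5 - s, 2 * s, 5 - s;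
         5 - s, 0, 0, 5 - s, 2 * s; 2 * s, 5 - s, 0, 0, 5 - s]) :
    A.rank = 3 := by
  refine rank3_aux A
    ((1/10 : ℝ) • !![5-s,2*s,5-s; 0,5-s,2*s; 0,0,5-s; 5-s,0,0; 2*s,5-s,0])
    !![1,0,0,1,(1+s)/2; 0,1,0,-((1+s)/2),-((1+s)/2); 0,0,1,(1+s)/2,1] ?_
    !![1,0,0,0,0; 0,1,0,0,0; 0,0,1,0,0] !![1,0,0; 0,1,0; 0,0,1; 0,0,0; 0,0,0]
    ((1/10 : ℝ) • !![5-s,2*s,5-s; 0,5-s,2*s; 0,0,5-s]) ?_ ?_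
  · ext i j
    fin_cases i <;> fin_cases j <;>
      simp [hA, Matrix.mul_apply, Fin.sum_univ_three, Matrix.smul_apply,
        Matrix.vecHead, Matrix.vecTail] <;>
      nlinarith [h5]
  · ext i j
    fin_cases i <;> fin_cases j <;>
      simp [hA, Matrix.mul_apply, Fin.sum_univ_three, Fin.sum_univ_five,
        Matrix.smul_apply, Matrix.vecHead, Matrix.vecTail]
  · simp only [Matrix.det_smul, Matrix.det_fin_three, Fintype.card_fin]
    simp [Matrix.vecHead, Matrix.vecTail]
    intro h
    nlinarith [h5, hs0]

private lemma rankB_aux (s : ℝ) (hs0 : 0 ≤ s) (h5 : s * s = 5)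
    (B : Matrix (Fin 5) (Fin 5) ℝ)
    (hB : B = (1 / 10 : ℝ) •
      !![0, 5 - s, 2 * s, 5 - s, 0; 5 - s, 2 * s, 5 - s, 0, 0; 2 * s, 5 - s, 0, 0, 5 - s;
         5 - s, 0, 0, 5 - s, 2 * s; 0, 0, 5 - s, 2 * s, 5 - s]) :
    B.rank = 3 := by
  refine rank3_aux B
    ((1/10 : ℝ) • !![0,5-s,2*s; 5-s,2*s,5-s; 2*s,5-s,0; 5-s,0,0; 0,0,5-s])
    !![1,0,0,1,(1+s)/2; 0,1,0,-((1+s)/2),-((1+s)/2); 0,0,1,(1+s)/2,1] ?_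
    !![1,0,0,0,0; 0,1,0,0,0; 0,0,1,0,0] !![1,0,0; 0,1,0; 0,0,1; 0,0,0; 0,0,0]
    ((1/10 : ℝ) • !![0,5-s,2*s; 5-s,2*s,5-s; 2*s,5-s,0]) ?_ ?_
  · ext i j
    fin_cases i <;> fin_cases j <;>
      simp [hB, Matrix.mul_apply, Fin.sum_univ_three, Matrix.smul_apply,
        Matrix.vecHead, Matrix.vecTail] <;>
      nlinarith [h5]
  · ext i j
    fin_cases i <;> fin_cases j <;>
      simp [hB, Matrix.mul_apply, Fin.sum_univ_three, Fin.sum_univ_five,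
        Matrix.smul_apply, Matrix.vecHead, Matrix.vecTail]
  · simp only [Matrix.det_smul, Matrix.det_fin_three, Fintype.card_fin]
    simp [Matrix.vecHead, Matrix.vecTail]
    intro h
    nlinarith [h5, hs0]

private lemma rankC_aux (s : ℝ) (hs0 : 0 ≤ s) (h5 : s * s = 5)
    (C : Matrix (Fin 5) (Fin 5) ℝ)
    (hC : C = (1/10 : ℝ) • !![2*(s-1), 8-2*s, 2*(s-1), 3-s, 3-s;
      8-2*s, 2*(s-1), 3-s, 3-s, 2*(s-1);
      2*(s-1), 3-s, 3-s, 2*(s-1), 8-2*s;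
      3-s, 3-s, 2*(s-1), 8-2*s, 2*(s-1);
      3-s, 2*(s-1), 8-2*s, 2*(s-1), 3-s]) :
    C.rank = 3 := by
  refine rank3_aux C
    ((1/10 : ℝ) • !![2*(s-1), 8-2*s, 2*(s-1); 8-2*s, 2*(s-1), 3-s; 2*(s-1), 3-s, 3-s;
      3-s, 3-s, 2*(s-1); 3-s, 2*(s-1), 8-2*s])
    !![1,0,0,1,(1+s)/2; 0,1,0,-((1+s)/2),-((1+s)/2); 0,0,1,(1+s)/2,1] ?_
    !![1,0,0,0,0; 0,1,0,0,0; 0,0,1,0,0] !![1,0,0; 0,1,0; 0,0,1; 0,0,0; 0,0,0]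
    ((1/10 : ℝ) • !![2*(s-1), 8-2*s, 2*(s-1); 8-2*s, 2*(s-1), 3-s; 2*(s-1), 3-s, 3-s]) ?_ ?_
  · ext i j
    fin_cases i <;> fin_cases j <;>
      simp [hC, Matrix.mul_apply, Fin.sum_univ_three, Matrix.smul_apply,
        Matrix.vecHead, Matrix.vecTail] <;>
      nlinarith [h5]
  · ext i j
    fin_cases i <;> fin_cases j <;>
      simp [hC, Matrix.mul_apply, Fin.sum_univ_three, Fin.sum_univ_five,
        Matrix.smul_apply, Matrix.vecHead, Matrix.vecTail]
  · simp only [Matrix.det_smul, Matrix.det_fin_three, Fintype.card_fin]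
    simp [Matrix.vecHead, Matrix.vecTail]
    intro h
    nlinarith [h5, hs0]

/-- The circulant matrix `C¹` admits a nonnegative factorization `C¹ = A¹ * B¹` of
inner dimension 5 in which `rank A¹ = rank B¹ = rank C¹ = 3`, with the explicit
nonnegative matrices `A¹` and `B¹` (entries from `{0, (5−√5)/10, 2√5/10}`). -/
theorem stmt_16
    (c : Fin 5 → ℝ)
    (hc : c = ![2 * (Real.sqrt 5 - 1) / 10, (8 - 2 * Real.sqrt 5) / 10,
      2 * (Real.sqrt 5 - 1) / 10, (3 - Real.sqrt 5) / 10, (3 - Real.sqrt 5) / 10])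
    (C1 : Matrix (Fin 5) (Fin 5) ℝ)
    (hC1 : ∀ i j : Fin 5, C1 i j = c (i + j))
    (A1 B1 : Matrix (Fin 5) (Fin 5) ℝ)
    (hA1 : A1 = (1 / 10 : ℝ) •
      !![5 - Real.sqrt 5, 2 * Real.sqrt 5, 5 - Real.sqrt 5, 0, 0;
         0, 5 - Real.sqrt 5, 2 * Real.sqrt 5, 5 - Real.sqrt 5, 0;
         0, 0, 5 - Real.sqrt 5, 2 * Real.sqrt 5, 5 - Real.sqrt 5;
         5 - Real.sqrt 5, 0, 0, 5 - Real.sqrt 5, 2 * Real.sqrt 5;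
         2 * Real.sqrt 5, 5 - Real.sqrt 5, 0, 0, 5 - Real.sqrt 5])
    (hB1 : B1 = (1 / 10 : ℝ) •
      !![0, 5 - Real.sqrt 5, 2 * Real.sqrt 5, 5 - Real.sqrt 5, 0;
         5 - Real.sqrt 5, 2 * Real.sqrt 5, 5 - Real.sqrt 5, 0, 0;
         2 * Real.sqrt 5, 5 - Real.sqrt 5, 0, 0, 5 - Real.sqrt 5;
         5 - Real.sqrt 5, 0, 0, 5 - Real.sqrt 5, 2 * Real.sqrt 5;
         0, 0, 5 - Real.sqrt 5, 2 * Real.sqrt 5, 5 - Real.sqrt 5]) :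
    (∀ i j, 0 ≤ A1 i j) ∧ (∀ i j, 0 ≤ B1 i j) ∧ A1 * B1 = C1 ∧
    A1.rank = 3 ∧ B1.rank = 3 ∧ C1.rank = 3 := by
  have hs0 : (0:ℝ) ≤ Real.sqrt 5 := Real.sqrt_nonneg 5
  have h5 : Real.sqrt 5 * Real.sqrt 5 = 5 := Real.mul_self_sqrt (by norm_num)
  set s := Real.sqrt 5 with hsdef
  have hCexp : C1 = (1/10 : ℝ) • !![2*(s-1), 8-2*s, 2*(s-1), 3-s, 3-s;
      8-2*s, 2*(s-1), 3-s, 3-s, 2*(s-1);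
      2*(s-1), 3-s, 3-s, 2*(s-1), 8-2*s;
      3-s, 3-s, 2*(s-1), 8-2*s, 2*(s-1);
      3-s, 2*(s-1), 8-2*s, 2*(s-1), 3-s] := by
    ext i j
    rw [hC1, hc]
    fin_cases i <;> fin_cases j <;>
      simp [Matrix.smul_apply, Matrix.vecHead, Matrix.vecTail] <;> ring
  refine ⟨?_, ?_, ?_, rankA_aux s hs0 h5 A1 hA1, rankB_aux s hs0 h5 B1 hB1,
    rankC_aux s hs0 h5 C1 hCexp⟩
  · intro i j
    fin_cases i <;> fin_cases j <;>
      simp [hA1, Matrix.smul_apply, Matrix.vecHead, Matrix.vecTail] <;>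
      nlinarith [h5, hs0]
  · intro i j
    fin_cases i <;> fin_cases j <;>
      simp [hB1, Matrix.smul_apply, Matrix.vecHead, Matrix.vecTail] <;>
      nlinarith [h5, hs0]
  · rw [hA1, hB1, hCexp]
    exact mulAB_aux s h5
end

section
/- Let x_1,…,x_5 ∈ ℝ² be the vertices of the regular pentagon given by x_i = ((√5−1)/10)(cos(2πi/5)tan(π/5) + sin(2πi/5), sin(2πi/5)tan(π/5) − cos(2πi/5)), and define y_i = (2/5)(K x_i + p) ∈ ℝ^5 where K has rows (sin(2πj/5), cos(2πj/5)) and p = ((√5−1)/10)·1. Then each y_i is nonnegative and satisfies ⟨y_i, (10/(√5−1))p⟩ = (√5−1)/5, i.e., the y_i lie in the regular 4-simplex 𝒰 = {u ∈ ℝ^5 : u ≥ 0, ⟨u, (10/(√5−1))p⟩ = (√5−1)/5}. -/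
open Real

lemma cospi5_pos : 0 < Real.cos (π/5) := by
  apply Real.cos_pos_of_mem_Ioo
  constructor <;> nlinarith [Real.pi_pos]

lemma trig_key (s : ℝ) :
    Real.tan (π/5) * Real.sin s - Real.cos s + 1
      = (Real.cos (π/5) - Real.cos (s + π/5)) / Real.cos (π/5) := by
  have h := cospi5_pos.ne'
  rw [Real.cos_add, Real.tan_eq_sin_div_cos]
  field_simp
  ring

lemma cos3pi5_le : Real.cos (3*π/5) ≤ Real.cos (π/5) := by
  have h1 : Real.cos (3*π/5) ≤ 0 := by
    apply Real.cos_nonpos_of_pi_div_two_le_of_le <;> nlinarith [Real.pi_pos]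
  linarith [cospi5_pos]

lemma cosbound (m : ℕ) (h2 : 2 ≤ m) (h10 : m ≤ 10) :
    Real.cos (2*π*m/5 + π/5) ≤ Real.cos (π/5) := by
  have hpi : Real.cos π ≤ Real.cos (π/5) := by
    rw [Real.cos_pi]; linarith [cospi5_pos]
  interval_cases m <;> push_cast
  · rw [show 2*π*2/5 + π/5 = π by ring]; exact hpi
  · rw [show 2*π*3/5 + π/5 = 2*π - 3*π/5 by ring, Real.cos_two_pi_sub]; exact cos3pi5_le
  · rw [show 2*π*4/5 + π/5 = 2*π - π/5 by ring, Real.cos_two_pi_sub]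
  · rw [show 2*π*5/5 + π/5 = π/5 + 2*π by ring, Real.cos_add_two_pi]
  · rw [show 2*π*6/5 + π/5 = 3*π/5 + 2*π by ring, Real.cos_add_two_pi]; exact cos3pi5_le
  · rw [show 2*π*7/5 + π/5 = π + 2*π by ring, Real.cos_add_two_pi]; exact hpi
  · rw [show 2*π*8/5 + π/5 = (2*π - 3*π/5) + 2*π by ring, Real.cos_add_two_pi,
      Real.cos_two_pi_sub]; exact cos3pi5_le
  · rw [show 2*π*9/5 + π/5 = (2*π - π/5) + 2*π by ring, Real.cos_add_two_pi,
      Real.cos_two_pi_sub]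
  · rw [show 2*π*10/5 + π/5 = (π/5 + 2*π) + 2*π by ring, Real.cos_add_two_pi,
      Real.cos_add_two_pi]

open Real in
/-- With `x i` the regular pentagon vertices and `y i = (2/5)(K xᵢ + p) ∈ ℝ⁵`, each
`y i` is nonnegative and satisfies `⟨y i, (10/(√5−1)) p⟩ = (√5−1)/5`, i.e. the
`y i` lie in the regular 4-simplex
`𝒰 = {u ∈ ℝ⁵ : u ≥ 0, ⟨u, (10/(√5−1)) p⟩ = (√5−1)/5}`. -/
theorem stmt_17
    (x : Fin 5 → Fin 2 → ℝ)
    (hx : ∀ i : Fin 5,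
      x i = fun t => (Real.sqrt 5 - 1) / 10 *
        (if t = 0 then
          cos (2 * π * ((i : ℕ) + 1) / 5) * tan (π / 5) + sin (2 * π * ((i : ℕ) + 1) / 5)
        else
          sin (2 * π * ((i : ℕ) + 1) / 5) * tan (π / 5) - cos (2 * π * ((i : ℕ) + 1) / 5)))
    (p : Fin 5 → ℝ) (hp : ∀ j, p j = (Real.sqrt 5 - 1) / 10)
    (y : Fin 5 → Fin 5 → ℝ)
    (hy : ∀ i j : Fin 5, y i j = (2 / 5) *
      (sin (2 * π * ((j : ℕ) + 1) / 5) * x i 0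
        + cos (2 * π * ((j : ℕ) + 1) / 5) * x i 1 + p j)) :
    ∀ i : Fin 5,
      (∀ j, 0 ≤ y i j) ∧
      (∑ j, y i j * (10 / (Real.sqrt 5 - 1) * p j) = (Real.sqrt 5 - 1) / 5) := by
  have hs5 : (1:ℝ) < Real.sqrt 5 := by
    nlinarith [Real.sq_sqrt (by norm_num : (5:ℝ) ≥ 0), Real.sqrt_nonneg 5]
  intro i
  constructor
  · intro j
    have hx0 : x i 0 = (Real.sqrt 5 - 1) / 10 *
        (cos (2 * π * ((i:ℕ) + 1) / 5) * tan (π / 5) + sin (2 * π * ((i:ℕ) + 1) / 5)) := by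
      rw [hx]; norm_num
    have hx1 : x i 1 = (Real.sqrt 5 - 1) / 10 *
        (sin (2 * π * ((i:ℕ) + 1) / 5) * tan (π / 5) - cos (2 * π * ((i:ℕ) + 1) / 5)) := by
      rw [hx]; norm_num
    have hform : y i j = (Real.sqrt 5 - 1) / 25 *
        ((Real.cos (π/5) - Real.cos (2*π*(((i:ℕ):ℝ)+((j:ℕ):ℝ)+2)/5 + π/5)) / Real.cos (π/5)) := by
      rw [hy, hx0, hx1, hp]
      set a := 2 * π * (((i:ℕ):ℝ) + 1) / 5 with ha
      set b := 2 * π * (((j:ℕ):ℝ) + 1) / 5 with hb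
      have hab : 2*π*(((i:ℕ):ℝ)+((j:ℕ):ℝ)+2)/5 = a + b := by rw [ha, hb]; ring
      rw [hab, ← trig_key (a+b), Real.sin_add, Real.cos_add]
      ring
    rw [hform]
    have h1 : Real.cos (2*π*(((i:ℕ):ℝ)+((j:ℕ):ℝ)+2)/5 + π/5) ≤ Real.cos (π/5) := by
      have := cosbound ((i:ℕ)+(j:ℕ)+2) (by omega) (by omega)
      push_cast at this
      convert this using 3
    apply mul_nonneg (by linarith)
    apply div_nonneg (by linarith) (le_of_lt cospi5_pos)
  · have h5 : Real.sqrt 5 - 1 ≠ 0 := by linarith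
    have hw : ∀ j : Fin 5, 10 / (Real.sqrt 5 - 1) * p j = 1 := by
      intro j; rw [hp]; field_simp
    simp only [hw, mul_one, hy, hp]
    rw [Fin.sum_univ_five]
    have e3 : ((3 : Fin 5) : ℕ) = 3 := rfl
    have e4 : ((4 : Fin 5) : ℕ) = 4 := rfl
    rw [e3, e4]
    norm_num
    have s3 : Real.sin (2*π*3/5) = -Real.sin (2*π*2/5) := by
      rw [show 2*π*3/5 = 2*π - 2*π*2/5 by ring, Real.sin_two_pi_sub]
    have s4 : Real.sin (2*π*4/5) = -Real.sin (2*π/5) := by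
      rw [show 2*π*4/5 = 2*π - 2*π/5 by ring, Real.sin_two_pi_sub]
    have c3 : Real.cos (2*π*3/5) = Real.cos (2*π*2/5) := by
      rw [show 2*π*3/5 = 2*π - 2*π*2/5 by ring, Real.cos_two_pi_sub]
    have c4 : Real.cos (2*π*4/5) = Real.cos (2*π/5) := by
      rw [show 2*π*4/5 = 2*π - 2*π/5 by ring, Real.cos_two_pi_sub]
    have c1 : Real.cos (2*π/5) = (Real.sqrt 5 - 1)/4 := by
      rw [show 2*π/5 = 2*(π/5) by ring, Real.cos_two_mul, Real.cos_pi_div_five]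
      have := Real.sq_sqrt (by norm_num : (5:ℝ) ≥ 0)
      nlinarith
    have c2 : Real.cos (2*π*2/5) = -(1 + Real.sqrt 5)/4 := by
      rw [show 2*π*2/5 = π - π/5 by ring, Real.cos_pi_sub, Real.cos_pi_div_five]
      ring
    rw [s3, s4, c3, c4, c1, c2]
    have hne : Real.sqrt 5 - 1 ≠ 0 := h5
    have hsq : Real.sqrt 5 ^ 2 = 5 := Real.sq_sqrt (by norm_num)
    field_simp
    nlinarith [hsq]
end

section
/- For the regular pentagon with vertices x_i as in Eq. (xvertices) and center 0, the projection of the regular 4-simplex 𝒰 (vertex matrix ((√5−1)/5)·I₅ shifted appropriately) onto the affine span of the embedded pentagon ℐ is a scaling of ℐ about its center by the factor (√5−1)/2; equivalently, with M¹, M³ as defined, ⟨M¹_{:1}, M¹_{:1}⟩ / ⟨M¹_{:1}, M³_{:1}⟩ = (√5−1)/2. -/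
set_option maxHeartbeats 1000000 in
open Real in
/-- The projection of the regular 4-simplex onto the affine span of the embedded
regular pentagon scales the pentagon about its center by the factor `(√5−1)/2`:
with the explicit first columns `M¹_{:1}` and `M³_{:1}` of the displacement
matrices, `⟨M¹_{:1}, M¹_{:1}⟩ / ⟨M¹_{:1}, M³_{:1}⟩ = (√5−1)/2`. -/
theorem stmt_19
    (M1 M3 : Fin 5 → ℝ)
    (hM1 : ∀ j : Fin 5, M1 j = (Real.sqrt 5 - 1) / 10 *
      (sin (2 * π * ((j : ℕ) + 2) / 5) * tan (π / 5)
        - cos (2 * π * ((j : ℕ) + 2) / 5)))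
    (hM3 : ∀ j : Fin 5, M3 j = (Real.sqrt 5 - 1) / 10 *
      (if j = 0 then 4 else -1)) :
    (∑ j, M1 j * M1 j) / (∑ j, M1 j * M3 j) = (Real.sqrt 5 - 1) / 2 := by
  have hc : Real.cos (π/5) = (1 + Real.sqrt 5)/4 := Real.cos_pi_div_five
  have hs5 : Real.sqrt 5 ^ 2 = 5 := Real.sq_sqrt (by norm_num)
  have hs5pos : (2:ℝ) < Real.sqrt 5 := by
    nlinarith [hs5, Real.sqrt_nonneg 5]
  have hcpos : Real.cos (π/5) > 0 := by rw [hc]; nlinarith [Real.sqrt_nonneg 5]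
  have hcne : Real.cos (π/5) ≠ 0 := ne_of_gt hcpos
  have hss : Real.sin (π/5) * Real.sin (π/5) = (5 - Real.sqrt 5)/8 := by
    have h := Real.sin_sq_add_cos_sq (π/5)
    rw [hc] at h
    nlinarith [h, hs5]
  have htan : Real.tan (π/5) = Real.sin (π/5) / Real.cos (π/5) := Real.tan_eq_sin_div_cos _
  have E0 : (2 * π * (((0:Fin 5):ℕ) + 2) / 5 : ℝ) = π - π/5 := by norm_num; ring
  have E1 : (2 * π * (((1:Fin 5):ℕ) + 2) / 5 : ℝ) = π + π/5 := by norm_num; ring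
  have E2 : (2 * π * (((2:Fin 5):ℕ) + 2) / 5 : ℝ) = 2*π - 2*(π/5) := by norm_num; ring
  have E3 : (2 * π * (((3:Fin 5):ℕ) + 2) / 5 : ℝ) = 2*π := by
    norm_num [show ((3:Fin 5):ℕ) = 3 from rfl]
  have E4 : (2 * π * (((4:Fin 5):ℕ) + 2) / 5 : ℝ) = 2*π + 2*(π/5) := by
    norm_num [show ((4:Fin 5):ℕ) = 4 from rfl]; ring
  have h0 : M1 0 = (3 - Real.sqrt 5)/5 := by
    rw [hM1 0, E0, Real.sin_pi_sub, Real.cos_pi_sub, htan]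
    rw [hc]
    field_simp
    nlinarith [hss, hs5]
  have h1 : M1 1 = (Real.sqrt 5 - 2)/5 := by
    rw [hM1 1, E1, Real.sin_add, Real.cos_add, Real.sin_pi, Real.cos_pi, htan]
    rw [hc]
    field_simp
    nlinarith [hss, hs5]
  have h2 : M1 2 = -((Real.sqrt 5 - 1)/10) := by
    rw [hM1 2, E2, Real.sin_sub, Real.cos_sub, Real.sin_two_pi, Real.cos_two_pi,
      Real.sin_two_mul, Real.cos_two_mul, htan]
    rw [hc]
    field_simp
    nlinarith [hss, hs5]
  have h3 : M1 3 = -((Real.sqrt 5 - 1)/10) := by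
    rw [hM1 3, E3, Real.sin_two_pi, Real.cos_two_pi]
    ring
  have h4 : M1 4 = (Real.sqrt 5 - 2)/5 := by
    rw [hM1 4, E4, Real.sin_add, Real.cos_add, Real.sin_two_pi, Real.cos_two_pi,
      Real.sin_two_mul, Real.cos_two_mul, htan]
    rw [hc]
    field_simp
    nlinarith [hss, hs5]
  have hN : (∑ j, M1 j * M1 j) = (7 - 3*Real.sqrt 5)/5 := by
    rw [Fin.sum_univ_five, h0, h1, h2, h3, h4]
    nlinarith [hs5]
  have hD : (∑ j, M1 j * M3 j) = (2*Real.sqrt 5 - 4)/5 := by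
    rw [Fin.sum_univ_five, h0, h1, h2, h3, h4, hM3 0, hM3 1, hM3 2, hM3 3, hM3 4]
    norm_num [show (1:Fin 5) ≠ 0 from by decide, show (2:Fin 5) ≠ 0 from by decide,
      show (3:Fin 5) ≠ 0 from by decide, show (4:Fin 5) ≠ 0 from by decide]
    nlinarith [hs5]
  rw [hN, hD, div_eq_div_iff (by nlinarith [hs5pos]) (by norm_num : (2:ℝ) ≠ 0)]
  nlinarith [hs5]
end
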